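/- arXiv:2210.15152 — 3 statements merged into one kernel-verified Lean document; each statement's English description precedes it below -/
import Mathlib

section
/- Suppose A is Hurwitz and matrices X, K_r satisfy the regulator equations X A_r = A X + B K_r + B K_t X and C X = C_r, where A + B K_t is Hurwitz. Then for the closed-loop system x' = (A + B K_t) x + B K_r x_r, x_r' = A_r x_r, the error e = C x − C_r x_r satisfies e(t) → 0 as t → ∞ for all initial conditions, since ξ = x − X x_r obeys ξ' = (A + B K_t) ξ and e = C ξ. -/
open Matrix Filter Topology

def IsHurwitz {n : Type*} [Fintype n] [DecidableEq n] (A : Matrix n n ℝ) : Prop :=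
  ∀ μ ∈ spectrum ℂ (A.map Complex.ofReal), μ.re < 0

/-!
The regulator equations turn `ξ = x - X x_r` into a solution of `ξ' = (A + B Kₜ) ξ`, and
`C X = C_r` turns the error into `C ξ`, so it suffices that solutions of a linear ODE with
Hurwitz matrix `F` decay. Such a solution is `ξ t = exp (t F) (ξ 0)`; splitting `ξ 0` along the
generalized eigenspaces of `F`, on the one for `μ` the operator `F - μ` is nilpotent, so there
`exp (t F) v = e^{μ t} ∑_{j<k} t^j / j! (F - μ)^j v`, which decays since `Re μ < 0`.
-/

open NormedSpace Finset

theorem HasDerivAt.const_mulVec {𝕜 : Type*} [NontriviallyNormedField 𝕜] {ι κ : Type*}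
    [Fintype ι] [Fintype κ] (M : Matrix ι κ 𝕜) {f : 𝕜 → κ → 𝕜} {f' : κ → 𝕜} {t : 𝕜}
    (hf : HasDerivAt f f' t) : HasDerivAt (fun s => M *ᵥ f s) (M *ᵥ f') t :=
  hasDerivAt_pi.2 fun i => by
    simpa only [mulVec, dotProduct] using
      HasDerivAt.fun_sum fun j _ => (hasDerivAt_pi.1 hf j).const_mul (M i j)

theorem tendsto_cexp_mul_mul_pow {μ : ℂ} (hμ : μ.re < 0) (j : ℕ) :
    Tendsto (fun t : ℝ => Complex.exp (t * μ) * (t : ℂ) ^ j) atTop (𝓝 0) := by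
  rw [tendsto_zero_iff_norm_tendsto_zero]
  refine (tendsto_rpow_mul_exp_neg_mul_atTop_nhds_zero j (-μ.re) (by linarith)).congr' ?_
  filter_upwards [eventually_ge_atTop 0] with t ht
  simp [Complex.norm_exp, abs_of_nonneg ht, mul_comm]

section LinearODE

variable {E : Type*} [NormedAddCommGroup E] [NormedSpace ℂ E]

theorem hasDerivAt_exp_smul_apply [CompleteSpace E] (F : E →L[ℂ] E) (v : E) (t : ℝ) :
    HasDerivAt (fun s : ℝ => exp ((s : ℂ) • F) v) (F (exp ((t : ℂ) • F) v)) t := by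
  have h := (hasDerivAt_exp_smul_const' (𝕂 := ℂ) F t).clm_apply (hasDerivAt_const _ v)
  simpa [Function.comp_def] using h.scomp t Complex.ofRealCLM.hasDerivAt

theorem eq_exp_smul_apply_of_hasDerivAt [CompleteSpace E] (F : E →L[ℂ] E) {u : ℝ → E}
    (hu : ∀ t, HasDerivAt u (F (u t)) t) :
    u = fun t : ℝ => exp ((t : ℂ) • F) (u 0) :=
  ODE_solution_unique_univ (v := fun _ => F) (s := fun _ => Set.univ) (t₀ := 0)
    (fun _ => F.lipschitz.lipschitzOnWith) (fun t => ⟨hu t, trivial⟩)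
    (fun t => ⟨hasDerivAt_exp_smul_apply F (u 0) t, trivial⟩) (by simp)

theorem exp_smul_apply_eq_sum_of_pow_apply_eq_zero [CompleteSpace E] (g : E →L[ℂ] E)
    {v : E} {k : ℕ} (hv : (g ^ k) v = 0) (s : ℂ) :
    exp (s • g) v = ∑ j ∈ range k, ((j.factorial : ℂ)⁻¹ * s ^ j) • (g ^ j) v := by
  have h := (exp_series_hasSum_exp' (𝕂 := ℂ) (s • g)).mapL (ContinuousLinearMap.apply ℂ E v)
  have hvanish : ∀ j ∉ range k, (g ^ j) v = 0 := fun j hj => by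
    rw [← Nat.sub_add_cancel (not_lt.1 (mem_range.not.1 hj)), pow_add]
    exact (congrArg (g ^ (j - k)) hv).trans (map_zero _)
  refine h.unique (hasSum_sum_of_ne_finset_zero (s := range k) fun j hj => ?_) |>.trans ?_
  · simp [smul_pow, hvanish j hj]
  · simp [smul_pow, smul_smul]

theorem exp_smul_eq_cexp_smul_exp_smul_sub [CompleteSpace E] (F : E →L[ℂ] E) (μ s : ℂ) :
    exp (s • F) = Complex.exp (s * μ) • exp (s • (F - μ • 1)) := by
  let _ : NormedAlgebra ℚ (E →L[ℂ] E) := NormedAlgebra.restrictScalars ℚ ℂ _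
  have hsplit : s • F = algebraMap ℂ _ (s * μ) + s • (F - μ • 1) := by
    rw [Algebra.algebraMap_eq_smul_one, smul_sub, smul_smul]
    abel
  rw [hsplit, NormedSpace.exp_add_of_commute (Algebra.commute_algebraMap_left _ _),
    ← algebraMap_exp_comm, ← Algebra.smul_def, Complex.exp_eq_exp_ℂ]

theorem tendsto_exp_smul_apply_of_mem_maxGenEigenspace [CompleteSpace E] (F : E →L[ℂ] E)
    {μ : ℂ} (hμ : μ.re < 0) {v : E} (hv : v ∈ Module.End.maxGenEigenspace (F : E →ₗ[ℂ] E) μ) :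
    Tendsto (fun t : ℝ => exp ((t : ℂ) • F) v) atTop (𝓝 0) := by
  obtain ⟨k, hk⟩ := (Module.End.mem_maxGenEigenspace _ _ _).1 hv
  have hgk : ((F - μ • 1) ^ k) v = 0 := by
    have hcoe : ((F - μ • 1 : E →L[ℂ] E) : E →ₗ[ℂ] E) = F - μ • 1 := by ext; simp
    rwa [← ContinuousLinearMap.coe_coe, ContinuousLinearMap.toLinearMap_pow, hcoe]
  simp_rw [exp_smul_eq_cexp_smul_exp_smul_sub F μ, _root_.smul_apply,
    exp_smul_apply_eq_sum_of_pow_apply_eq_zero _ hgk, smul_sum, smul_smul]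
  rw [← sum_const_zero (s := range k)]
  refine tendsto_finsetSum _ fun j _ => ?_
  rw [← zero_smul ℂ (((F - μ • 1) ^ j) v)]
  refine Tendsto.smul_const ?_ _
  simpa [mul_left_comm] using (tendsto_cexp_mul_mul_pow hμ j).const_mul ((j.factorial : ℂ)⁻¹)

theorem tendsto_zero_of_hasDerivAt_of_spectrum_re_neg [FiniteDimensional ℂ E]
    (f : Module.End ℂ E) (hf : ∀ μ ∈ spectrum ℂ f, μ.re < 0) {u : ℝ → E}
    (hu : ∀ t, HasDerivAt u (f (u t)) t) : Tendsto u atTop (𝓝 0) := by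
  have := FiniteDimensional.complete ℂ E
  let F := LinearMap.toContinuousLinearMap f
  obtain ⟨c, hc, hsum⟩ := (Submodule.mem_iSup_iff_exists_finsupp _ (u 0)).1
    ((Module.End.iSup_maxGenEigenspace_eq_top f).symm ▸ Submodule.mem_top)
  rw [eq_exp_smul_apply_of_hasDerivAt F hu, ← hsum]
  simp_rw [Finsupp.sum, map_sum]
  rw [← sum_const_zero (s := c.support)]
  refine tendsto_finsetSum _ fun μ hμ => ?_
  have hμf : f.HasEigenvalue μ := Module.End.HasUnifEigenvalue.lt zero_lt_one
    ((Submodule.ne_bot_iff _).2 ⟨c μ, hc μ, Finsupp.mem_support_iff.1 hμ⟩)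
  exact tendsto_exp_smul_apply_of_mem_maxGenEigenspace F
    (hf μ (Module.End.hasEigenvalue_iff_mem_spectrum.1 hμf)) (hc μ)

end LinearODE

theorem IsHurwitz.tendsto_zero_of_hasDerivAt {ι : Type*} [Fintype ι] [DecidableEq ι]
    {A : Matrix ι ι ℝ} (hA : IsHurwitz A) {ξ : ℝ → ι → ℝ}
    (hξ : ∀ t, HasDerivAt ξ (A *ᵥ ξ t) t) : Tendsto ξ atTop (𝓝 0) := by
  let z : ℝ → ι → ℂ := fun t i => ξ t i
  have hz : ∀ t, HasDerivAt z (toLin' (A.map Complex.ofReal) (z t)) t := fun t =>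
    hasDerivAt_pi.2 fun i => by
      rw [toLin'_apply]
      exact (hasDerivAt_pi.1 (hξ t) i).ofReal_comp.congr_deriv
        (RingHom.map_mulVec Complex.ofRealHom A (ξ t) i)
  have hz0 := tendsto_zero_of_hasDerivAt_of_spectrum_re_neg _ (by rwa [spectrum_toLin']) hz
  refine tendsto_pi_nhds.2 fun i => ?_
  simpa [z, Function.comp_def] using
    (Complex.continuous_re.tendsto 0).comp (tendsto_pi_nhds.1 hz0 i)

theorem regulator_error_tendsto_zero_general {n m p q : ℕ}
    (A : Matrix (Fin n) (Fin n) ℝ) (B : Matrix (Fin n) (Fin m) ℝ)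
    (C : Matrix (Fin p) (Fin n) ℝ)
    (Ar : Matrix (Fin q) (Fin q) ℝ) (Cr : Matrix (Fin p) (Fin q) ℝ)
    (Kt : Matrix (Fin m) (Fin n) ℝ) (Kr : Matrix (Fin m) (Fin q) ℝ)
    (X : Matrix (Fin n) (Fin q) ℝ)
    (hcl : IsHurwitz (A + B * Kt))
    (hreg1 : X * Ar = A * X + B * Kr + B * Kt * X)
    (hreg2 : C * X = Cr)
    (x : ℝ → Fin n → ℝ) (xr : ℝ → Fin q → ℝ)
    (hx : ∀ t : ℝ, HasDerivAt x ((A + B * Kt).mulVec (x t) + (B * Kr).mulVec (xr t)) t)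
    (hxr : ∀ t : ℝ, HasDerivAt xr (Ar.mulVec (xr t)) t) :
    Tendsto (fun t => C.mulVec (x t) - Cr.mulVec (xr t)) atTop (𝓝 0) ∧
    (∀ t : ℝ, HasDerivAt (fun s => x s - X.mulVec (xr s))
      ((A + B * Kt).mulVec (x t - X.mulVec (xr t))) t) ∧
    (∀ t : ℝ, C.mulVec (x t) - Cr.mulVec (xr t) = C.mulVec (x t - X.mulVec (xr t))) := by
  set ξ : ℝ → Fin n → ℝ := fun s => x s - X *ᵥ xr s
  have hξ : ∀ t, HasDerivAt ξ ((A + B * Kt) *ᵥ ξ t) t := fun t => by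
    refine ((hx t).sub ((hxr t).const_mulVec X)).congr_deriv ?_
    rw [mulVec_mulVec, hreg1]
    simp only [ξ, mulVec_sub, add_mulVec, mulVec_mulVec, Matrix.add_mul]
    abel
  have herr : ∀ t, C *ᵥ x t - Cr *ᵥ xr t = C *ᵥ ξ t := fun t => by
    simp only [ξ, mulVec_sub, mulVec_mulVec, hreg2]
  refine ⟨?_, hξ, herr⟩
  simp_rw [herr]
  exact ((continuous_const.matrix_mulVec continuous_id).tendsto' 0 0 (mulVec_zero C)).comp
    (hcl.tendsto_zero_of_hasDerivAt hξ)

/-- Output regulation: if the regulator equations hold and `A + B Kₜ` is Hurwitz,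
the tracking error of the closed loop tends to zero; indeed `ξ = x - X x_r`
obeys `ξ' = (A + B Kₜ) ξ` and `e = C ξ`. -/
theorem regulator_error_tendsto_zero {n m p q : ℕ}
    (A : Matrix (Fin n) (Fin n) ℝ) (B : Matrix (Fin n) (Fin m) ℝ)
    (C : Matrix (Fin p) (Fin n) ℝ)
    (Ar : Matrix (Fin q) (Fin q) ℝ) (Cr : Matrix (Fin p) (Fin q) ℝ)
    (Kt : Matrix (Fin m) (Fin n) ℝ) (Kr : Matrix (Fin m) (Fin q) ℝ)
    (X : Matrix (Fin n) (Fin q) ℝ)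
    (hA : IsHurwitz A) (hcl : IsHurwitz (A + B * Kt))
    (hreg1 : X * Ar = A * X + B * Kr + B * Kt * X)
    (hreg2 : C * X = Cr)
    (x : ℝ → Fin n → ℝ) (xr : ℝ → Fin q → ℝ)
    (hx : ∀ t : ℝ, HasDerivAt x ((A + B * Kt).mulVec (x t) + (B * Kr).mulVec (xr t)) t)
    (hxr : ∀ t : ℝ, HasDerivAt xr (Ar.mulVec (xr t)) t) :
    Tendsto (fun t => C.mulVec (x t) - Cr.mulVec (xr t)) atTop (𝓝 0) ∧
    (∀ t : ℝ, HasDerivAt (fun s => x s - X.mulVec (xr s))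
      ((A + B * Kt).mulVec (x t - X.mulVec (xr t))) t) ∧
    (∀ t : ℝ, C.mulVec (x t) - Cr.mulVec (xr t) = C.mulVec (x t - X.mulVec (xr t))) :=
  regulator_error_tendsto_zero_general A B C Ar Cr Kt Kr X hcl hreg1 hreg2 x xr hx hxr
end

section
/- If [[A − λI, B],[C, 0]] has full row rank n + p for every eigenvalue λ of A_r, and A + BK is Hurwitz while all eigenvalues of A_r have nonnegative real part, then the regulator equations X A_r = (A + BK) X + B K_r and C X = C_r admit a solution pair (X, K_r) for any C_r. -/
/-!
Writing `U = K X + Kr`, the regulator equations become `X Ar - A X - B U = 0`, `C X = Cr`. All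
coefficients are real, so the real parts of a complex solution solve them; it therefore suffices
that `(X, U) ↦ (X Ar - A X - B U, C X)` is onto over `ℂ`. Dually (through the trace pairing) this
means that `Ar P = P A - Q C` and `P B = 0` force `P = 0` and `Q = 0`. If a row vector `w` is such
that `w (Ar - μ)` is annihilated by `P` and `Q`, for an eigenvalue `μ` of `Ar`, then `(w P, -w Q)`
lies in the left kernel of `[[A - μ, B], [C, 0]]`, which is trivial by the rank condition. Hence the
common left kernel of `P` and `Q` contains every generalized eigenspace of `Ar` acting on row
vectors, i.e. everything.
-/

open Matrix

namespace Module.End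

variable {K V : Type*} [Field K] [AddCommGroup V] [Module K V]

theorem maxGenEigenspace_le_of_sub_smul_mem {f : End K V} {μ : K} {W : Submodule K V}
    (hW : ∀ v, f v - μ • v ∈ W → v ∈ W) : f.maxGenEigenspace μ ≤ W := by
  suffices h : ∀ k v, ((f - μ • (1 : End K V)) ^ k) v = 0 → v ∈ W by
    intro v hv
    obtain ⟨k, hk⟩ := (mem_maxGenEigenspace f μ v).1 hv
    exact h k v hk
  intro k
  induction k with
  | zero => simp_all
  | succ k ih =>
    intro v hk
    rw [pow_succ, mul_apply] at hk
    exact hW v (by simpa using ih _ hk)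

theorem eq_top_of_forall_hasEigenvalue [IsAlgClosed K] [FiniteDimensional K V] (f : End K V)
    {W : Submodule K V} (hW : ∀ μ, f.HasEigenvalue μ → ∀ v, f v - μ • v ∈ W → v ∈ W) :
    W = ⊤ := by
  rw [eq_top_iff, ← f.iSup_maxGenEigenspace_eq_top, iSup_le_iff]
  intro μ
  by_cases hμ : f.HasEigenvalue μ
  · exact maxGenEigenspace_le_of_sub_smul_mem (hW μ hμ)
  · refine (maxGenEigenspace_le_of_sub_smul_mem (W := ⊥) fun v hv => ?_).trans bot_le
    by_contra hv0
    exact hμ (hasEigenvalue_of_hasEigenvector ⟨mem_eigenspace_iff.2 (sub_eq_zero.1 hv), hv0⟩)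

end Module.End

namespace Matrix

section Field

variable {K : Type*} [Field K] {m n p q : Type*} [Fintype m] [Fintype n] [Fintype p] [Fintype q]

theorem vecMul_injective_of_rank_eq_card {M : Matrix m n K} (h : M.rank = Fintype.card m) :
    Function.Injective M.vecMul :=
  vecMul_injective_iff.2 <| linearIndependent_iff_card_eq_finrank_span.2 <| by
    rw [Set.finrank, ← rank_eq_finrank_span_row, h]

theorem mem_spectrum_of_hasEigenvalue_vecMulLinear [DecidableEq q] {M : Matrix q q K} {μ : K}
    (h : Module.End.HasEigenvalue M.vecMulLinear μ) : μ ∈ spectrum K M := by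
  obtain ⟨w, hw⟩ := h.exists_hasEigenvector
  rw [spectrum.mem_iff, isUnit_iff_isUnit_det, isUnit_iff_ne_zero, not_not,
    ← exists_vecMul_eq_zero_iff]
  refine ⟨w, hw.2, ?_⟩
  rw [Algebra.algebraMap_eq_smul_one, vecMul_sub, vecMul_smul, vecMul_one, ← vecMulLinear_apply,
    hw.apply_eq_smul, sub_self]

theorem exists_eq_trace_mul [DecidableEq m] [DecidableEq n] (φ : Module.Dual K (Matrix m n K)) :
    ∃ P : Matrix n m K, ∀ X, φ X = (P * X).trace := by
  refine ⟨of fun j i => φ (single i j 1), fun X => ?_⟩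
  conv_lhs => rw [matrix_eq_sum_single X]
  have hs : ∀ i j, single i j (X i j) = X i j • single i j (1 : K) := by simp [smul_single]
  simp only [map_sum, hs, map_smul, smul_eq_mul, trace, diag, mul_apply, of_apply]
  rw [Finset.sum_comm]
  simp only [mul_comm]

def francisMap (A : Matrix n n K) (B : Matrix n m K) (C : Matrix p n K) (Ar : Matrix q q K) :
    Matrix n q K × Matrix m q K →ₗ[K] Matrix n q K × Matrix p q K where
  toFun XU := (XU.1 * Ar - A * XU.1 - B * XU.2, C * XU.1)
  map_add' _ _ := by
    ext : 1 <;> simp only [Prod.fst_add, Prod.snd_add, Matrix.add_mul, Matrix.mul_add]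
    abel
  map_smul' _ _ := by
    ext : 1 <;> simp only [Prod.smul_fst, Prod.smul_snd, Matrix.smul_mul, Matrix.mul_smul,
      smul_sub, RingHom.id_apply]

theorem eq_zero_of_francis_dual [DecidableEq n] [DecidableEq q] [IsAlgClosed K]
    {A : Matrix n n K} {B : Matrix n m K} {C : Matrix p n K} {Ar : Matrix q q K}
    (hrank : ∀ μ ∈ spectrum K Ar,
      (fromBlocks (A - μ • 1) B C 0).rank = Fintype.card n + Fintype.card p)
    {P : Matrix q n K} {Q : Matrix q p K} (hPQ : Ar * P = P * A - Q * C) (hPB : P * B = 0) :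
    P = 0 ∧ Q = 0 := by
  set W := LinearMap.ker P.vecMulLinear ⊓ LinearMap.ker Q.vecMulLinear
  have hW : W = ⊤ := by
    refine Module.End.eq_top_of_forall_hasEigenvalue Ar.vecMulLinear fun μ hμ w hw => ?_
    have hinj := vecMul_injective_of_rank_eq_card
      ((hrank μ (mem_spectrum_of_hasEigenvalue_vecMulLinear hμ)).trans (Fintype.card_sum ..).symm)
    have hwP : (w ᵥ* Ar) ᵥ* P = μ • (w ᵥ* P) := by
      have := (Submodule.mem_inf.1 hw).1
      rwa [LinearMap.mem_ker, vecMulLinear_apply, vecMulLinear_apply, sub_vecMul, smul_vecMul,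
        sub_eq_zero] at this
    have hAC : (w ᵥ* P) ᵥ* A - (w ᵥ* Q) ᵥ* C = μ • (w ᵥ* P) := by
      rw [vecMul_vecMul, vecMul_vecMul, ← vecMul_sub, ← hPQ, ← vecMul_vecMul, hwP]
    have hblock : Sum.elim (w ᵥ* P) (-(w ᵥ* Q)) ᵥ* fromBlocks (A - μ • 1) B C 0 = 0 := by
      have hB : (w ᵥ* P) ᵥ* B + (-(w ᵥ* Q)) ᵥ* 0 = 0 := by
        rw [vecMul_vecMul, hPB, vecMul_zero, vecMul_zero, add_zero]
      have hA : (w ᵥ* P) ᵥ* (A - μ • 1) + (-(w ᵥ* Q)) ᵥ* C = 0 := by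
        rw [vecMul_sub, vecMul_smul, vecMul_one, neg_vecMul, ← hAC]
        abel
      rw [vecMul_fromBlocks, Sum.elim_comp_inl, Sum.elim_comp_inr, hA, hB, Sum.elim_zero_zero]
    have h0 := hinj (hblock.trans (zero_vecMul _).symm)
    refine Submodule.mem_inf.2 ⟨?_, ?_⟩ <;> rw [LinearMap.mem_ker, vecMulLinear_apply] <;>
      funext i
    · simpa using congrFun h0 (Sum.inl i)
    · simpa using congrFun h0 (Sum.inr i)
  have hall : ∀ w, w ᵥ* P = 0 ∧ w ᵥ* Q = 0 := fun w => by
    have hw : w ∈ W := hW ▸ Submodule.mem_top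
    simpa [W] using hw
  exact ⟨ext_iff_vecMul.2 fun w => by simp [(hall w).1],
    ext_iff_vecMul.2 fun w => by simp [(hall w).2]⟩

theorem francisMap_surjective [DecidableEq n] [DecidableEq p] [DecidableEq q] [IsAlgClosed K]
    {A : Matrix n n K} {B : Matrix n m K} {C : Matrix p n K} {Ar : Matrix q q K}
    (hrank : ∀ μ ∈ spectrum K Ar,
      (fromBlocks (A - μ • 1) B C 0).rank = Fintype.card n + Fintype.card p) :
    Function.Surjective (francisMap A B C Ar) := by
  rw [← LinearMap.dualMap_injective_iff, injective_iff_map_eq_zero]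
  intro φ hφ
  obtain ⟨P, hP⟩ := exists_eq_trace_mul (φ ∘ₗ LinearMap.inl K _ _)
  obtain ⟨Q, hQ⟩ := exists_eq_trace_mul (φ ∘ₗ LinearMap.inr K _ _)
  have hφ_apply : ∀ W R, φ (W, R) = (P * W).trace + (Q * R).trace := fun W R => by
    rw [← hP, ← hQ, LinearMap.comp_apply, LinearMap.comp_apply, ← map_add]
    simp
  have hφF : ∀ XU, φ (francisMap A B C Ar XU) = 0 := fun XU =>
    congrArg (fun ψ : Module.Dual K _ => ψ XU) hφ
  have hPQ : Ar * P = P * A - Q * C := ext_iff_trace_mul_right.2 fun X => by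
    have := hφF (X, 0)
    simp only [francisMap, LinearMap.coe_mk, AddHom.coe_mk, hφ_apply, Matrix.mul_zero,
      sub_zero] at this
    rw [Matrix.mul_sub, trace_sub, ← Matrix.mul_assoc, ← Matrix.mul_assoc, ← Matrix.mul_assoc,
      trace_mul_comm (P * X)] at this
    rw [Matrix.sub_mul, trace_sub, Matrix.mul_assoc]
    linear_combination this
  have hPB : P * B = 0 := ext_iff_trace_mul_right.2 fun U => by
    have := hφF (0, U)
    simp only [francisMap, LinearMap.coe_mk, AddHom.coe_mk, hφ_apply, Matrix.mul_zero,
      Matrix.zero_mul, zero_sub, sub_zero] at this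
    rw [Matrix.mul_neg, trace_neg, trace_zero, add_zero, neg_eq_zero, ← Matrix.mul_assoc] at this
    rw [this, Matrix.zero_mul, trace_zero]
  obtain ⟨rfl, rfl⟩ := eq_zero_of_francis_dual hrank hPQ hPB
  exact LinearMap.ext fun ⟨W, R⟩ => by simp [hφ_apply]

end Field

section Complex

variable {l m n : Type*} [Fintype m]

theorem map_re_mul_map_ofReal (X : Matrix l m ℂ) (R : Matrix m n ℝ) :
    (X * R.map Complex.ofReal).map Complex.re = X.map Complex.re * R := by
  ext i j
  simp [mul_apply, Complex.re_sum]

theorem map_re_map_ofReal_mul (L : Matrix l m ℝ) (X : Matrix m n ℂ) :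
    (L.map Complex.ofReal * X).map Complex.re = L * X.map Complex.re := by
  ext i j
  simp [mul_apply, Complex.re_sum]

end Complex

end Matrix

theorem regulator_equations_solvable_general {n m p q : ℕ}
    (A : Matrix (Fin n) (Fin n) ℝ) (B : Matrix (Fin n) (Fin m) ℝ)
    (C : Matrix (Fin p) (Fin n) ℝ) (Ar : Matrix (Fin q) (Fin q) ℝ)
    (K : Matrix (Fin m) (Fin n) ℝ)
    (hrank : ∀ lam ∈ spectrum ℂ (Ar.map Complex.ofReal),
      (Matrix.fromBlocks (A.map Complex.ofReal - lam • 1) (B.map Complex.ofReal)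
        (C.map Complex.ofReal) 0).rank = n + p) :
    ∀ Cr : Matrix (Fin p) (Fin q) ℝ,
      ∃ (X : Matrix (Fin n) (Fin q) ℝ) (Kr : Matrix (Fin m) (Fin q) ℝ),
        X * Ar = (A + B * K) * X + B * Kr ∧ C * X = Cr := by
  intro Cr
  obtain ⟨⟨X, U⟩, hXU⟩ := francisMap_surjective
    (fun μ hμ => (hrank μ hμ).trans (by simp)) (0, Cr.map Complex.ofReal)
  simp only [francisMap, LinearMap.coe_mk, AddHom.coe_mk, Prod.mk.injEq, sub_sub,
    sub_eq_zero] at hXU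
  obtain ⟨hdyn, hout⟩ := hXU
  refine ⟨X.map Complex.re, U.map Complex.re - K * X.map Complex.re, ?_, ?_⟩
  · have := congrArg (map · Complex.re) hdyn
    rw [map_re_mul_map_ofReal, Matrix.map_add _ Complex.add_re, map_re_map_ofReal_mul,
      map_re_map_ofReal_mul] at this
    rw [this, Matrix.add_mul, Matrix.mul_sub, Matrix.mul_assoc]
    abel
  · simpa [map_re_map_ofReal_mul, Function.comp_def] using congrArg (map · Complex.re) hout

/-- Solvability of the Francis (regulator) equations under the standard
non-resonance full-row-rank condition. -/
theorem regulator_equations_solvable {n m p q : ℕ}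
    (A : Matrix (Fin n) (Fin n) ℝ) (B : Matrix (Fin n) (Fin m) ℝ)
    (C : Matrix (Fin p) (Fin n) ℝ) (Ar : Matrix (Fin q) (Fin q) ℝ)
    (K : Matrix (Fin m) (Fin n) ℝ)
    (hrank : ∀ lam ∈ spectrum ℂ (Ar.map Complex.ofReal),
      (Matrix.fromBlocks (A.map Complex.ofReal - lam • 1) (B.map Complex.ofReal)
        (C.map Complex.ofReal) 0).rank = n + p)
    (hK : IsHurwitz (A + B * K))
    (hAr : ∀ μ ∈ spectrum ℂ (Ar.map Complex.ofReal), 0 ≤ μ.re) :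
    ∀ Cr : Matrix (Fin p) (Fin q) ℝ,
      ∃ (X : Matrix (Fin n) (Fin q) ℝ) (Kr : Matrix (Fin m) (Fin q) ℝ),
        X * Ar = (A + B * K) * X + B * Kr ∧ C * X = Cr :=
  regulator_equations_solvable_general A B C Ar K hrank
end

section
/- Two block matrices R and 𝓡 as defined below are mutual inverses: with Γ = (D₁₁₁₂ᵀD₁₁₁₂ − γ²I)⁻¹, R = [[D₁₁ᵀ;D₁₂ᵀ]][D₁₁, D₁₂] − diag(γ²I, 0) where D₁₁ = [[0, D₁₁₁₂],[0, D₁₁₂₂]] and D₁₂ = [0; I], satisfies R·𝓡 = 𝓡·R = I for 𝓡 = [[−γ⁻²I, 0, 0],[0, Γ, −ΓD₁₁₂₂ᵀ],[0, −D₁₁₂₂Γ, I + D₁₁₂₂ΓD₁₁₂₂ᵀ]], provided γ > σ̄(D₁₁₁₂). -/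
/-!
Regrouping the index `(k ⊕ p) ⊕ m` as `k ⊕ (p ⊕ m)` makes `R` block diagonal,
`diag(-γ²I, M)` with `M = [[S + D₁₁₂₂ᵀD₁₁₂₂, D₁₁₂₂ᵀ], [D₁₁₂₂, I]]` and `S = D₁₁₁₂ᵀD₁₁₁₂ - γ²I`.
The Schur complement of the block `I` in `M` is `S`, which is negative definite by the
hypothesis on `γ`; so `M⁻¹` is read off from `Γ = S⁻¹`, and `𝓡 = diag(-γ⁻²I, M⁻¹)`.
A one-sided inverse of a square matrix over a field is two-sided.
-/

open Matrix

variable {α k p q m : Type*}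

theorem fromBlocks_add_mul_mul_eq_one [Fintype p] [Fintype m] [DecidableEq p] [DecidableEq m]
    [Ring α] {S Γ : Matrix p p α} (hSΓ : S * Γ = 1) (B : Matrix m p α) (C : Matrix p m α) :
    fromBlocks (S + C * B) C B 1 * fromBlocks Γ (-(Γ * C)) (-(B * Γ)) (1 + B * Γ * C) = 1 := by
  rw [fromBlocks_multiply, ← fromBlocks_one]
  congr 1 <;> simp only [Matrix.add_mul, Matrix.mul_add, Matrix.mul_neg, Matrix.one_mul,
    Matrix.mul_one, ← Matrix.mul_assoc, hSΓ] <;> abel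

theorem fromBlocks_fromBlocks_zero_eq_submatrix_sumAssoc [Zero α] (A : Matrix k k α)
    (P : Matrix p p α) (Q : Matrix p m α) (B : Matrix m p α) (D : Matrix m m α) :
    fromBlocks (fromBlocks A 0 0 P) (fromRows 0 Q) (fromCols 0 B) D =
      (fromBlocks A 0 0 (fromBlocks P Q B D)).submatrix
        (Equiv.sumAssoc k p m) (Equiv.sumAssoc k p m) := by
  ext ((i | i) | i) ((j | j) | j) <;> rfl

theorem fromBlocks_fromBlocks_zero_mul_eq_one [Fintype k] [Fintype p] [Fintype m]
    [DecidableEq k] [DecidableEq p] [DecidableEq m] [Ring α] {A A' : Matrix k k α}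
    {P P' : Matrix p p α} {Q Q' : Matrix p m α} {B B' : Matrix m p α} {D D' : Matrix m m α}
    (hA : A * A' = 1) (hPQBD : fromBlocks P Q B D * fromBlocks P' Q' B' D' = 1) :
    fromBlocks (fromBlocks A 0 0 P) (fromRows 0 Q) (fromCols 0 B) D *
      fromBlocks (fromBlocks A' 0 0 P') (fromRows 0 Q') (fromCols 0 B') D' = 1 := by
  simp only [fromBlocks_fromBlocks_zero_eq_submatrix_sumAssoc, submatrix_mul_equiv,
    fromBlocks_multiply, hA, hPQBD, Matrix.zero_mul, Matrix.mul_zero, add_zero, zero_add,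
    fromBlocks_one, submatrix_one_equiv]

theorem fromBlocks_gram_sub_fromBlocks_smul_one [Fintype q] [Fintype m] [DecidableEq k]
    [DecidableEq p] [DecidableEq m] [CommRing α] (c : α) (D₁ : Matrix q p α)
    (D₂ : Matrix m p α) :
    let D₁₁ : Matrix (q ⊕ m) (k ⊕ p) α := fromBlocks 0 D₁ 0 D₂
    let D₁₂ : Matrix (q ⊕ m) m α := fromRows 0 1
    fromBlocks (D₁₁ᵀ * D₁₁) (D₁₁ᵀ * D₁₂) (D₁₂ᵀ * D₁₁) (D₁₂ᵀ * D₁₂) - fromBlocks (c • 1) 0 0 0 =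
      fromBlocks (fromBlocks (-(c • 1)) 0 0 (D₁ᵀ * D₁ - c • 1 + D₂ᵀ * D₂)) (fromRows 0 D₂ᵀ)
        (fromCols 0 D₂) 1 := by
  intro D₁₁ D₁₂
  rw [← fromBlocks_one (l := k) (m := p), fromBlocks_smul, sub_eq_add_neg]
  simp only [D₁₁, D₁₂, fromBlocks_transpose, transpose_fromRows, fromBlocks_multiply,
    fromBlocks_mul_fromRows, fromCols_mul_fromBlocks, fromCols_mul_fromRows, fromBlocks_neg,
    fromBlocks_add, transpose_zero, transpose_one, Matrix.zero_mul, Matrix.mul_zero,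
    Matrix.one_mul, Matrix.mul_one, add_zero, zero_add, smul_zero, neg_zero]
  congr 2
  abel

/-- The block matrices `R` and `𝓡` from the H∞ controller construction are
mutual inverses, provided `γ` exceeds the largest singular value of `D₁₁₁₂`
(expressed as `γ²I − D₁₁₁₂ᵀD₁₁₁₂ ≻ 0`). Here the column split of `D₁₁` is
`(k, p)` with `k = m₁ − p`, and its row split is `(2p − m, m)`. -/
theorem R_calR_mutual_inverses {p m k : ℕ} (γ : ℝ) (hγ : 0 < γ)
    (D1112 : Matrix (Fin (2 * p - m)) (Fin p) ℝ)
    (D1122 : Matrix (Fin m) (Fin p) ℝ)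
    (hσ : (γ ^ 2 • (1 : Matrix (Fin p) (Fin p) ℝ) - D1112ᵀ * D1112).PosDef) :
    let Γ : Matrix (Fin p) (Fin p) ℝ := (D1112ᵀ * D1112 - γ ^ 2 • 1)⁻¹
    let D11 : Matrix (Fin (2 * p - m) ⊕ Fin m) (Fin k ⊕ Fin p) ℝ :=
      Matrix.fromBlocks 0 D1112 0 D1122
    let D12 : Matrix (Fin (2 * p - m) ⊕ Fin m) (Fin m) ℝ := Matrix.fromRows 0 1
    let R : Matrix ((Fin k ⊕ Fin p) ⊕ Fin m) ((Fin k ⊕ Fin p) ⊕ Fin m) ℝ :=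
      Matrix.fromBlocks (D11ᵀ * D11) (D11ᵀ * D12) (D12ᵀ * D11) (D12ᵀ * D12)
        - Matrix.fromBlocks (γ ^ 2 • 1) 0 0 0
    let calR : Matrix ((Fin k ⊕ Fin p) ⊕ Fin m) ((Fin k ⊕ Fin p) ⊕ Fin m) ℝ :=
      Matrix.fromBlocks
        (Matrix.fromBlocks (-((γ ^ 2)⁻¹ • 1)) 0 0 Γ)
        (Matrix.fromRows 0 (-(Γ * D1122ᵀ)))
        (Matrix.fromCols 0 (-(D1122 * Γ)))
        (1 + D1122 * Γ * D1122ᵀ)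
    R * calR = 1 ∧ calR * R = 1 := by
  intro Γ D11 D12 R calR
  have hS : IsUnit (D1112ᵀ * D1112 - γ ^ 2 • 1) := by
    simpa only [neg_sub] using hσ.isUnit.neg
  have hSΓ : (D1112ᵀ * D1112 - γ ^ 2 • 1) * Γ = 1 :=
    mul_nonsing_inv _ ((isUnit_iff_isUnit_det _).mp hS)
  have hγ2 : -(γ ^ 2 • 1 : Matrix (Fin k) (Fin k) ℝ) * -((γ ^ 2)⁻¹ • 1) = 1 := by
    rw [neg_mul_neg, smul_mul_smul_comm, mul_inv_cancel₀ (pow_ne_zero 2 hγ.ne'),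
      Matrix.one_mul, one_smul]
  have hR : R = fromBlocks
      (fromBlocks (-(γ ^ 2 • 1)) 0 0 (D1112ᵀ * D1112 - γ ^ 2 • 1 + D1122ᵀ * D1122))
      (fromRows 0 D1122ᵀ) (fromCols 0 D1122) 1 :=
    fromBlocks_gram_sub_fromBlocks_smul_one _ _ _
  have hRcalR : R * calR = 1 := hR ▸
    fromBlocks_fromBlocks_zero_mul_eq_one hγ2 (fromBlocks_add_mul_mul_eq_one hSΓ D1122 D1122ᵀ)
  exact ⟨hRcalR, mul_eq_one_comm.mp hRcalR⟩
end
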